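/- Let 1 ≤ p < q, S > 0, and let u, w : [0,S] → E be paths of finite p-variation into a normed space with u_0 = w_0. Then ‖u − w‖_{q-var,[0,S]} ≤ (2 ‖u − w‖_{∞,[0,S]})^{(q−p)/q} · (‖u‖_{p-var,[0,S]} + ‖w‖_{p-var,[0,S]})^{p/q}. -/

import Mathlib

open Set

noncomputable section

/-- A finite partition of the interval `[a, b]`, given by points
`a = t 0 ≤ t 1 ≤ ⋯ ≤ t n = b`. -/
structure PVarPartition (a b : ℝ) where
  n : ℕ
  t : ℕ → ℝ
  npos : 0 < n
  first : t 0 = a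
  last : t n = b
  mono : ∀ i, i < n → t i ≤ t (i + 1)

variable {E : Type*} [NormedAddCommGroup E]

/-- `∑_i ‖y_{t_{i+1}} - y_{t_i}‖^p` along a partition. -/
def pvarSum (p : ℝ) {a b : ℝ} (y : ℝ → E) (P : PVarPartition a b) : ℝ :=
  ∑ i ∈ Finset.range P.n, ‖y (P.t (i + 1)) - y (P.t i)‖ ^ p

/-- The set of all `p`-variation sums of `y` over partitions of `[a,b]`. -/
def pvarSums (p a b : ℝ) (y : ℝ → E) : Set ℝ :=
  {r | ∃ P : PVarPartition a b, r = pvarSum p y P}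

/-- `y` has finite `p`-variation on `[a,b]`. -/
def FinitePVar (p a b : ℝ) (y : ℝ → E) : Prop :=
  BddAbove (pvarSums p a b y)

/-- The `p`-variation seminorm of `y` on `[a,b]`. -/
def pVar (p a b : ℝ) (y : ℝ → E) : ℝ :=
  sSup (pvarSums p a b y) ^ (1 / p)

/-- The uniform norm of `y` on `[a,b]`. -/
def unifNorm (a b : ℝ) (y : ℝ → E) : ℝ :=
  sSup ((fun t => ‖y t‖) '' Icc a b)

end

/-!
Write `y = u - w`. On every partition, Minkowski's inequality bounds the `p`-variation sum of `y`
by `(‖u‖_{p-var} + ‖w‖_{p-var})^p`; in particular `y` is bounded, so `‖y‖_∞` is a genuine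
supremum. Each increment of `y` has norm at most `2‖y‖_∞`, so `|Δy|^q ≤ (2‖y‖_∞)^{q-p} |Δy|^p`
termwise, and taking the supremum over partitions and a `q`-th root gives the estimate.
-/

namespace PVarPartition

variable {a b : ℝ}

theorem t_le_t (P : PVarPartition a b) {j k : ℕ} (hjk : j ≤ k) (hk : k ≤ P.n) :
    P.t j ≤ P.t k := by
  induction k, hjk using Nat.le_induction with
  | base => exact le_rfl
  | succ k _ ih => exact (ih (by omega)).trans (P.mono k (by omega))

theorem t_mem_Icc (P : PVarPartition a b) {i : ℕ} (hi : i ≤ P.n) : P.t i ∈ Icc a b :=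
  ⟨by simpa [P.first] using P.t_le_t (Nat.zero_le i) hi,
    by simpa [P.last] using P.t_le_t hi le_rfl⟩

def throughPoint {s : ℝ} (hs : s ∈ Icc a b) : PVarPartition a b where
  n := 2
  t i := if i = 0 then a else if i = 1 then s else b
  npos := two_pos
  first := rfl
  last := rfl
  mono i hi := by interval_cases i <;> simp [hs.1, hs.2]

end PVarPartition

section PVariation

variable {E : Type*} [NormedAddCommGroup E] {p a b : ℝ}

theorem pvarSum_nonneg (y : ℝ → E) (P : PVarPartition a b) : 0 ≤ pvarSum p y P :=
  Finset.sum_nonneg fun _ _ => Real.rpow_nonneg (norm_nonneg _) p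

theorem pvarSum_throughPoint (y : ℝ → E) {s : ℝ} (hs : s ∈ Icc a b) :
    pvarSum p y (PVarPartition.throughPoint hs) = ‖y s - y a‖ ^ p + ‖y b - y s‖ ^ p := by
  simp [pvarSum, PVarPartition.throughPoint, Finset.sum_range_succ]

theorem sSup_pvarSums_nonneg (y : ℝ → E) : 0 ≤ sSup (pvarSums p a b y) := by
  refine Real.sSup_nonneg ?_
  rintro _ ⟨P, rfl⟩
  exact pvarSum_nonneg y P

theorem pVar_nonneg (y : ℝ → E) : 0 ≤ pVar p a b y :=
  Real.rpow_nonneg (sSup_pvarSums_nonneg y) _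

theorem pvarSum_rpow_le_pVar (hp : 0 ≤ p) {y : ℝ → E} (hy : FinitePVar p a b y)
    (P : PVarPartition a b) : pvarSum p y P ^ (1 / p) ≤ pVar p a b y :=
  Real.rpow_le_rpow (pvarSum_nonneg y P) (le_csSup hy ⟨P, rfl⟩) (by positivity)

theorem pVar_le_of_forall_pvarSum_le {q B : ℝ} (hab : a ≤ b) (hq : 0 ≤ q) {y : ℝ → E}
    (hB : ∀ P : PVarPartition a b, pvarSum q y P ≤ B) : pVar q a b y ≤ B ^ (1 / q) := by
  have hne : (pvarSums q a b y).Nonempty :=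
    ⟨_, PVarPartition.throughPoint (left_mem_Icc.2 hab), rfl⟩
  refine Real.rpow_le_rpow (sSup_pvarSums_nonneg y) (csSup_le hne ?_) (by positivity)
  rintro _ ⟨P, rfl⟩
  exact hB P

theorem norm_sub_le_pVar (hp : 0 < p) {y : ℝ → E} (hy : FinitePVar p a b y) {s : ℝ}
    (hs : s ∈ Icc a b) : ‖y s - y a‖ ≤ pVar p a b y := by
  have hsum : ‖y s - y a‖ ^ p ≤ pvarSum p y (PVarPartition.throughPoint hs) := by
    rw [pvarSum_throughPoint]
    exact le_add_of_nonneg_right (Real.rpow_nonneg (norm_nonneg _) p)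
  calc ‖y s - y a‖ = (‖y s - y a‖ ^ p) ^ (1 / p) := by
        rw [← Real.rpow_mul (norm_nonneg _), mul_one_div_cancel hp.ne', Real.rpow_one]
    _ ≤ pvarSum p y (PVarPartition.throughPoint hs) ^ (1 / p) :=
        Real.rpow_le_rpow (by positivity) hsum (by positivity)
    _ ≤ pVar p a b y := pvarSum_rpow_le_pVar hp.le hy _

theorem FinitePVar.bddAbove_norm (hp : 0 < p) {y : ℝ → E} (hy : FinitePVar p a b y) :
    BddAbove ((fun t => ‖y t‖) '' Icc a b) := by
  refine ⟨‖y a‖ + pVar p a b y, ?_⟩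
  rintro _ ⟨s, hs, rfl⟩
  exact (norm_le_norm_add_norm_sub' (y s) (y a)).trans
    (add_le_add le_rfl (norm_sub_le_pVar hp hy hs))

theorem pvarSum_sub_rpow_le (hp : 1 ≤ p) (u w : ℝ → E) (P : PVarPartition a b) :
    pvarSum p (u - w) P ^ (1 / p) ≤ pvarSum p u P ^ (1 / p) + pvarSum p w P ^ (1 / p) := by
  have hp0 : 0 < p := one_pos.trans_le hp
  have hterm : pvarSum p (u - w) P ≤ ∑ i ∈ Finset.range P.n,
      (‖u (P.t (i + 1)) - u (P.t i)‖ + ‖w (P.t (i + 1)) - w (P.t i)‖) ^ p := by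
    refine Finset.sum_le_sum fun i _ => Real.rpow_le_rpow (norm_nonneg _) ?_ hp0.le
    rw [Pi.sub_apply, Pi.sub_apply, sub_sub_sub_comm]
    exact norm_sub_le _ _
  exact (Real.rpow_le_rpow (pvarSum_nonneg _ P) hterm (by positivity)).trans
    (Real.Lp_add_le_of_nonneg _ hp (fun _ _ => norm_nonneg _) fun _ _ => norm_nonneg _)

theorem pvarSum_sub_le_rpow (hp : 1 ≤ p) {u w : ℝ → E} (hu : FinitePVar p a b u)
    (hw : FinitePVar p a b w) (P : PVarPartition a b) :
    pvarSum p (u - w) P ≤ (pVar p a b u + pVar p a b w) ^ p := by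
  have hp0 : 0 < p := one_pos.trans_le hp
  rw [← Real.rpow_inv_le_iff_of_pos (pvarSum_nonneg _ P)
    (add_nonneg (pVar_nonneg u) (pVar_nonneg w)) hp0, ← one_div]
  exact (pvarSum_sub_rpow_le hp u w P).trans
    (add_le_add (pvarSum_rpow_le_pVar hp0.le hu P) (pvarSum_rpow_le_pVar hp0.le hw P))

theorem FinitePVar.sub (hp : 1 ≤ p) {u w : ℝ → E} (hu : FinitePVar p a b u)
    (hw : FinitePVar p a b w) : FinitePVar p a b (u - w) := by
  refine ⟨(pVar p a b u + pVar p a b w) ^ p, ?_⟩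
  rintro _ ⟨P, rfl⟩
  exact pvarSum_sub_le_rpow hp hu hw P

theorem pvarSum_le_mul_pvarSum {q N : ℝ} (hq : 0 < q) (hpq : p ≤ q) {y : ℝ → E}
    (hN : ∀ t ∈ Icc a b, ‖y t‖ ≤ N) (P : PVarPartition a b) :
    pvarSum q y P ≤ (2 * N) ^ (q - p) * pvarSum p y P := by
  rw [pvarSum, pvarSum, Finset.mul_sum]
  refine Finset.sum_le_sum fun i hi => ?_
  have hi : i < P.n := Finset.mem_range.1 hi
  set d := ‖y (P.t (i + 1)) - y (P.t i)‖
  have hd : d ≤ 2 * N := by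
    have := (norm_sub_le _ _).trans
      (add_le_add (hN _ (P.t_mem_Icc hi)) (hN _ (P.t_mem_Icc hi.le)))
    linarith
  calc d ^ q = d ^ (q - p) * d ^ p := by
        rw [← Real.rpow_add' (norm_nonneg _) (by simpa using hq.ne'), sub_add_cancel]
    _ ≤ (2 * N) ^ (q - p) * d ^ p := by gcongr

end PVariation

theorem pvariation_interpolation_general
    {E : Type*} [NormedAddCommGroup E]
    (p q S : ℝ) (hp : 1 ≤ p) (hpq : p < q) (hS : 0 < S)
    (u w : ℝ → E)
    (hu : FinitePVar p 0 S u) (hw : FinitePVar p 0 S w) :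
    pVar q 0 S (fun t => u t - w t)
      ≤ (2 * unifNorm 0 S (fun t => u t - w t)) ^ ((q - p) / q)
        * (pVar p 0 S u + pVar p 0 S w) ^ (p / q) := by
  have hp0 : 0 < p := one_pos.trans_le hp
  have hq0 : 0 < q := hp0.trans hpq
  set V := pVar p 0 S u + pVar p 0 S w
  set N := unifNorm 0 S (u - w)
  have hN : ∀ t ∈ Icc 0 S, ‖(u - w) t‖ ≤ N := fun t ht =>
    le_csSup ((hu.sub hp hw).bddAbove_norm hp0) (mem_image_of_mem _ ht)
  have h2N : 0 ≤ 2 * N := by linarith [(norm_nonneg _).trans (hN 0 (left_mem_Icc.2 hS.le))]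
  have hV : 0 ≤ V := add_nonneg (pVar_nonneg u) (pVar_nonneg w)
  calc pVar q 0 S (u - w) ≤ ((2 * N) ^ (q - p) * V ^ p) ^ (1 / q) :=
        pVar_le_of_forall_pvarSum_le hS.le hq0.le fun P =>
          (pvarSum_le_mul_pvarSum hq0 hpq.le hN P).trans
            (mul_le_mul_of_nonneg_left (pvarSum_sub_le_rpow hp hu hw P) (by positivity))
    _ = (2 * N) ^ ((q - p) / q) * V ^ (p / q) := by
        rw [Real.mul_rpow (by positivity) (by positivity), ← Real.rpow_mul h2N,
          ← Real.rpow_mul hV, mul_one_div, mul_one_div]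

/-- **Interpolation estimate for `p`-variation norms.**
If `1 ≤ p < q` and `u, w` are paths of finite `p`-variation on `[0,S]` with `u_0 = w_0`,
then `‖u-w‖_{q-var} ≤ (2‖u-w‖_∞)^{(q-p)/q} (‖u‖_{p-var} + ‖w‖_{p-var})^{p/q}`. -/
theorem pvariation_interpolation
    {E : Type*} [NormedAddCommGroup E]
    (p q S : ℝ) (hp : 1 ≤ p) (hpq : p < q) (hS : 0 < S)
    (u w : ℝ → E)
    (hu : FinitePVar p 0 S u) (hw : FinitePVar p 0 S w)
    (h0 : u 0 = w 0) :
    pVar q 0 S (fun t => u t - w t)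
      ≤ (2 * unifNorm 0 S (fun t => u t - w t)) ^ ((q - p) / q)
        * (pVar p 0 S u + pVar p 0 S w) ^ (p / q) :=
  pvariation_interpolation_general p q S hp hpq hS u w hu hw
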